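/- Let s₁, s₂ be real parameters and write z₁ = x₁ + iy₁, z₂ = x₂ + iy₂. At every point (z₁,z₂) of the open set where all five exponentials e^{2πi(s₂−1)−2πi(z₁+z₂)}, e^{2πi(s₂−1)−2πi z₂}, e^{2πi z₂}, e^{2πi(z₁+z₂)}, e^{2πi z₁} avoid the ray [1,∞), the real part of the potential function satisfies the differential equation Re Φ^{±(s₁,s₂)}(z₁,z₂) = (1/(2π))·V^{(s₁,s₂)}(z₁,z₂) + y₁·(∂/∂y₁)Re Φ^{±(s₁,s₂)}(z₁,z₂) + y₂·(∂/∂y₂)Re Φ^{±(s₁,s₂)}(z₁,z₂), where the partial derivatives are taken with respect to the imaginary parts y₁, y₂ holding x₁, x₂ fixed, and V^{(s₁,s₂)}(z₁,z₂) = D(e^{2πi(s₂−1)−2πi(z₁+z₂)}) − D(e^{2πi(s₂−1)−2πi z₂}) + D(e^{2πi z₂}) − D(e^{2πi(z₁+z₂)}) + D(e^{2πi z₁}). -/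

import Mathlib

open Real

/-- The dilogarithm `Li₂(z) = -∫₀¹ log(1 - t z)/t dt` (principal branch of `log`). -/
noncomputable def Li2 (z : ℂ) : ℂ :=
  -∫ t in (0:ℝ)..1, Complex.log (1 - (t:ℂ) * z) / (t:ℂ)

/-- `z` avoids the ray `[1,∞) ⊆ ℂ`. -/
def OffRay (z : ℂ) : Prop := ¬(z.im = 0 ∧ 1 ≤ z.re)

/-- The Bloch–Wigner function `D(z) = Im Li₂(z) + log|z|·arg(1-z)`. -/
noncomputable def BW (z : ℂ) : ℝ :=
  (Li2 z).im + Real.log ‖z‖ * (1 - z).arg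

/-- The potential function `Φ^{ε(s₁,s₂)}(z₁,z₂)` of the Whitehead link, where `ε = 1`
gives `Φ^{+(s₁,s₂)}` and `ε = -1` gives `Φ^{-(s₁,s₂)}`. -/
noncomputable def PhiS (ε s₁ s₂ z₁ z₂ : ℂ) : ℂ :=
  (1 / (2 * (π:ℂ) * Complex.I)) *
    (ε * (2*(π:ℂ)*Complex.I*(s₁ - 1)) * (2*(π:ℂ)*Complex.I*(z₁ - 1/2))
     - (2*(π:ℂ)*Complex.I*(s₂ - 1)) * (2*(π:ℂ)*Complex.I*z₁ + 2*(π:ℂ)*Complex.I*z₂)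
     + Li2 (Complex.exp (2*(π:ℂ)*Complex.I*(s₂ - 1) - 2*(π:ℂ)*Complex.I*z₁
            - 2*(π:ℂ)*Complex.I*z₂))
     - Li2 (Complex.exp (2*(π:ℂ)*Complex.I*(s₂ - 1) - 2*(π:ℂ)*Complex.I*z₂))
     + Li2 (Complex.exp (2*(π:ℂ)*Complex.I*z₂))
     - Li2 (Complex.exp (2*(π:ℂ)*Complex.I*(z₁ + z₂)))
     + Li2 (Complex.exp (2*(π:ℂ)*Complex.I*z₁)))


/-!
`Li₂` is holomorphic off the ray `[1, ∞)` with `Li₂'(z) = -log(1 - z)/z` (differentiation under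
the integral sign), so `d/du Li₂(eᵘ) = -log(1 - eᵘ)`, and `∂/∂y Re F(x + iy) = Re(i F'(x + iy))`
makes both partial derivatives of `Re Φ` explicit. Every exponent `u` occurring in `Φ` has
`Re u = log |eᵘ|` homogeneous linear in `(y₁, y₂)`, because `s₂` is real; hence
`(y₁ ∂_{y₁} + y₂ ∂_{y₂}) Re (Li₂(eᵘ)/(2πi)) = -log |eᵘ| · arg(1 - eᵘ)/(2π)`, which is exactly what
turns `Im Li₂(eᵘ)` into `D(eᵘ)`. The polynomial part of `Re Φ` is homogeneous linear in `(y₁, y₂)`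
as well, since `ε` and `s₁` are real, so it is annihilated by `1 - y₁ ∂_{y₁} - y₂ ∂_{y₂}`.
-/

open Complex (I slitPlane)
open Set MeasureTheory intervalIntegral

theorem offRay_iff_one_sub_mem_slitPlane {z : ℂ} : OffRay z ↔ 1 - z ∈ slitPlane := by
  rw [OffRay, Complex.mem_slitPlane_iff]
  simp only [Complex.sub_re, Complex.one_re, Complex.sub_im, Complex.one_im, sub_pos, zero_sub,
    neg_ne_zero, not_and_or, not_le, ne_eq]
  tauto

theorem isOpen_setOf_offRay : IsOpen {z : ℂ | OffRay z} := by
  simp only [offRay_iff_one_sub_mem_slitPlane]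
  exact Complex.isOpen_slitPlane.preimage (by fun_prop)

theorem OffRay.one_sub_mul_mem_slitPlane {z : ℂ} (h : OffRay z) {t : ℝ} (ht : t ∈ Icc 0 1) :
    1 - t * z ∈ slitPlane := by
  have h' : 1 + -z ∈ slitPlane := by simpa [← sub_eq_add_neg] using
    offRay_iff_one_sub_mem_slitPlane.1 h
  simpa [Complex.real_smul, ← sub_eq_add_neg] using
    Complex.starConvex_one_slitPlane.add_smul_mem h' ht.1 ht.2

theorem OffRay.one_sub_mul_ne_zero {z : ℂ} (h : OffRay z) {t : ℝ} (ht : t ∈ Icc 0 1) :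
    1 - t * z ≠ 0 :=
  Complex.slitPlane_ne_zero (h.one_sub_mul_mem_slitPlane ht)

theorem hasDerivAt_log_one_sub_mul {z : ℂ} {t : ℝ} (h : 1 - t * z ∈ slitPlane) :
    HasDerivAt (fun s : ℝ => Complex.log (1 - s * z)) (-z / (1 - t * z)) t := by
  have := ((Complex.ofRealCLM.hasDerivAt (x := t)).mul_const z).const_sub 1 |>.clog_real h
  simpa [neg_div] using this

theorem intervalIntegrable_Li2_integrand {z : ℂ} (h : OffRay z) :
    IntervalIntegrable (fun t : ℝ => Complex.log (1 - t * z) / t) volume 0 1 := by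
  -- The integrand is the slope of `f` at `0`, hence extends continuously to `t = 0`.
  set f : ℝ → ℂ := fun s => Complex.log (1 - s * z)
  set U : Set ℝ := {t | 1 - t * z ∈ slitPlane}
  have hU : IsOpen U := Complex.isOpen_slitPlane.preimage (by fun_prop)
  have hIcc : uIcc 0 1 ⊆ U := fun t ht =>
    h.one_sub_mul_mem_slitPlane (by rwa [uIcc_of_le zero_le_one] at ht)
  have hdslope : ContinuousOn (dslope f 0) U :=
    (continuousOn_dslope (hU.mem_nhds (hIcc left_mem_uIcc))).2
      ⟨fun t ht => (hasDerivAt_log_one_sub_mul ht).continuousAt.continuousWithinAt,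
        (hasDerivAt_log_one_sub_mul (hIcc left_mem_uIcc)).differentiableAt⟩
  refine (hdslope.mono hIcc).intervalIntegrable.congr_uIoo fun t ht => ?_
  rw [uIoo_of_le zero_le_one] at ht
  simp [dslope_of_ne f ht.1.ne', slope, f, div_eq_inv_mul, Complex.real_smul]

open Metric in
theorem OffRay.exists_bound_inv_one_sub_mul {z₀ : ℂ} (h : OffRay z₀) :
    ∃ r > 0, ∃ C : ℝ, ∀ z ∈ ball z₀ r, OffRay z ∧ ∀ t ∈ Icc (0:ℝ) 1, ‖(1 - t * z)⁻¹‖ ≤ C := by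
  obtain ⟨r, hr, hsub⟩ := Metric.isOpen_iff.1 isOpen_setOf_offRay z₀ h
  have hball : closedBall z₀ (r / 2) ⊆ {z | OffRay z} :=
    (closedBall_subset_ball (by linarith)).trans hsub
  have hcont : ContinuousOn (fun p : ℝ × ℂ => (1 - p.1 * p.2)⁻¹)
      (Icc 0 1 ×ˢ closedBall z₀ (r / 2)) :=
    ContinuousOn.inv₀ (by fun_prop) fun p hp => (hball hp.2).one_sub_mul_ne_zero hp.1
  obtain ⟨C, hC⟩ :=
    (isCompact_Icc.prod (isCompact_closedBall _ _)).exists_bound_of_continuousOn hcont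
  exact ⟨r / 2, by positivity, C, fun z hz =>
    ⟨hball (ball_subset_closedBall hz), fun t ht => hC (t, z) ⟨ht, ball_subset_closedBall hz⟩⟩⟩

theorem integral_inv_one_sub_mul {z : ℂ} (h : OffRay z) (hz : z ≠ 0) :
    ∫ t in (0:ℝ)..1, (1 - t * z)⁻¹ = -Complex.log (1 - z) / z := by
  have hslit := offRay_iff_one_sub_mem_slitPlane.1 h
  rw [← Complex.log_inv _ (Complex.slitPlane_arg_ne_pi hslit),
    Complex.log_inv_eq_integral hslit, mul_div_cancel_left₀ _ hz]
  simp only [Complex.real_smul]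

theorem hasDerivAt_Li2 {z : ℂ} (h : OffRay z) (hz : z ≠ 0) :
    HasDerivAt Li2 (-Complex.log (1 - z) / z) z := by
  obtain ⟨r, hr, C, hC⟩ := h.exists_bound_inv_one_sub_mul
  have hIoc : ∀ {t : ℝ}, t ∈ uIoc 0 1 → t ∈ Icc 0 1 ∧ (t : ℂ) ≠ 0 := fun ht => by
    rw [uIoc_of_le zero_le_one] at ht
    exact ⟨Ioc_subset_Icc_self ht, Complex.ofReal_ne_zero.2 ht.1.ne'⟩
  have key := hasDerivAt_integral_of_dominated_loc_of_deriv_le (μ := volume) (a := 0) (b := 1)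
    (F := fun z (t : ℝ) => Complex.log (1 - t * z) / t) (F' := fun z (t : ℝ) => -(1 - t * z)⁻¹)
    (bound := fun _ => C) (Metric.ball_mem_nhds z hr)
    (Filter.eventually_of_mem (Metric.ball_mem_nhds z hr) fun w hw =>
      (intervalIntegrable_Li2_integrand (hC w hw).1).def'.aestronglyMeasurable)
    (intervalIntegrable_Li2_integrand h)
    ((ContinuousOn.neg <| ContinuousOn.inv₀ (by fun_prop) fun t ht =>
      h.one_sub_mul_ne_zero (hIoc ht).1).aestronglyMeasurable measurableSet_uIoc)
    (Filter.Eventually.of_forall fun t ht w hw => by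
      simpa only [norm_neg] using (hC w hw).2 t (hIoc ht).1)
    intervalIntegrable_const
    (Filter.Eventually.of_forall fun t ht w hw => by
      have hd := (((hasDerivAt_id' w).const_mul (t : ℂ)).const_sub 1).clog
        ((hC w hw).1.one_sub_mul_mem_slitPlane (hIoc ht).1) |>.div_const (t : ℂ)
      refine hd.congr_deriv ?_
      field_simp [(hC w hw).1.one_sub_mul_ne_zero (hIoc ht).1, (hIoc ht).2])
  have hLi2 := key.2.fun_neg
  rwa [intervalIntegral.integral_neg, neg_neg, integral_inv_one_sub_mul h hz] at hLi2

theorem HasDerivAt.Li2_exp {f : ℂ → ℂ} {f' z : ℂ} (hf : HasDerivAt f f' z)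
    (h : OffRay (Complex.exp (f z))) :
    HasDerivAt (fun w => Li2 (Complex.exp (f w)))
      (-Complex.log (1 - Complex.exp (f z)) * f') z := by
  refine ((hasDerivAt_Li2 h (Complex.exp_ne_zero _)).comp z hf.cexp).congr_deriv ?_
  field_simp [Complex.exp_ne_zero]

theorem BW_exp (u : ℂ) :
    BW (Complex.exp u) =
      (Li2 (Complex.exp u)).im + u.re * (Complex.log (1 - Complex.exp u)).im := by
  simp [BW, Complex.norm_exp, Complex.log_im]

theorem deriv_re_comp_add_mul_I_of_hasDerivAt {f : ℂ → ℂ} {f' z : ℂ} {x y : ℝ}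
    (hf : HasDerivAt f f' z) (hz : z = x + y * I) :
    deriv (fun t : ℝ => (f (x + t * I)).re) y = (f' * I).re := by
  have hline : HasDerivAt (fun w : ℂ => x + w * I) I y := by
    simpa using ((hasDerivAt_id' (y : ℂ)).mul_const I).const_add (x : ℂ)
  subst hz
  exact (hf.comp (y : ℂ) hline).real_of_complex.deriv

local notation "τ" => 2 * (π : ℂ) * I

theorem re_one_div_two_pi_I_mul (X : ℂ) : (1 / τ * X).re = X.im / (2 * π) := by
  have hπ : (π : ℂ) ≠ 0 := Complex.ofReal_ne_zero.2 Real.pi_ne_zero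
  rw [show 1 / τ * X = ((-I * X) / (2 * π : ℝ)) by push_cast; field_simp; simp [Complex.I_sq],
    Complex.div_ofReal_re]
  simp

theorem hasDerivAt_PhiS_fst (ε s₁ s₂ z₁ z₂ : ℂ)
    (h1 : OffRay (Complex.exp (τ * (s₂ - 1) - τ * z₁ - τ * z₂)))
    (h4 : OffRay (Complex.exp (τ * (z₁ + z₂))))
    (h5 : OffRay (Complex.exp (τ * z₁))) :
    HasDerivAt (fun z => PhiS ε s₁ s₂ z z₂)
      (ε * (τ * (s₁ - 1)) - τ * (s₂ - 1)
        + Complex.log (1 - Complex.exp (τ * (s₂ - 1) - τ * z₁ - τ * z₂))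
        + Complex.log (1 - Complex.exp (τ * (z₁ + z₂)))
        - Complex.log (1 - Complex.exp (τ * z₁))) z₁ := by
  have hτ : τ ≠ 0 := by simp [Real.pi_ne_zero]
  have hz := hasDerivAt_id' z₁
  have l1 := (((hz.const_mul τ).const_sub (τ * (s₂ - 1))).sub_const (τ * z₂)).Li2_exp h1
  have l4 := ((hz.add_const z₂).const_mul τ).Li2_exp h4
  have l5 := (hz.const_mul τ).Li2_exp h5
  have lin := (((hz.sub_const (1 / 2)).const_mul τ).const_mul (ε * (τ * (s₁ - 1)))).sub
    (((hz.const_mul τ).add_const (τ * z₂)).const_mul (τ * (s₂ - 1)))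
  refine (((((lin.add l1).sub_const _).add_const _).sub l4).add l5).const_mul (1 / τ)
    |>.congr_deriv ?_
  field_simp
  ring

theorem hasDerivAt_PhiS_snd (ε s₁ s₂ z₁ z₂ : ℂ)
    (h1 : OffRay (Complex.exp (τ * (s₂ - 1) - τ * z₁ - τ * z₂)))
    (h2 : OffRay (Complex.exp (τ * (s₂ - 1) - τ * z₂)))
    (h3 : OffRay (Complex.exp (τ * z₂)))
    (h4 : OffRay (Complex.exp (τ * (z₁ + z₂)))) :
    HasDerivAt (fun z => PhiS ε s₁ s₂ z₁ z)
      (-(τ * (s₂ - 1))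
        + Complex.log (1 - Complex.exp (τ * (s₂ - 1) - τ * z₁ - τ * z₂))
        - Complex.log (1 - Complex.exp (τ * (s₂ - 1) - τ * z₂))
        - Complex.log (1 - Complex.exp (τ * z₂))
        + Complex.log (1 - Complex.exp (τ * (z₁ + z₂)))) z₂ := by
  have hτ : τ ≠ 0 := by simp [Real.pi_ne_zero]
  have hz := hasDerivAt_id' z₂
  have l1 := ((hz.const_mul τ).const_sub (τ * (s₂ - 1) - τ * z₁)).Li2_exp h1
  have l2 := ((hz.const_mul τ).const_sub (τ * (s₂ - 1))).Li2_exp h2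
  have l3 := (hz.const_mul τ).Li2_exp h3
  have l4 := ((hz.const_add z₁).const_mul τ).Li2_exp h4
  have lin := (((hz.const_mul τ).const_add (τ * z₁)).const_mul (τ * (s₂ - 1))).const_sub
    (ε * (τ * (s₁ - 1)) * (τ * (z₁ - 1 / 2)))
  refine ((((((lin.add l1).sub l2).add l3).sub l4).add_const _).const_mul (1 / τ)
    |>.congr_deriv ?_)
  field_simp
  ring

theorem stmt_9 (ε : ℂ) (hε : ε = 1 ∨ ε = -1) (s₁ s₂ x₁ y₁ x₂ y₂ : ℝ)
    (z₁ z₂ : ℂ) (hz₁ : z₁ = (x₁:ℂ) + (y₁:ℝ)*Complex.I) (hz₂ : z₂ = (x₂:ℂ) + (y₂:ℝ)*Complex.I)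
    (h1 : OffRay (Complex.exp (2*(π:ℂ)*Complex.I*((s₂:ℂ) - 1) - 2*(π:ℂ)*Complex.I*(z₁ + z₂))))
    (h2 : OffRay (Complex.exp (2*(π:ℂ)*Complex.I*((s₂:ℂ) - 1) - 2*(π:ℂ)*Complex.I*z₂)))
    (h3 : OffRay (Complex.exp (2*(π:ℂ)*Complex.I*z₂)))
    (h4 : OffRay (Complex.exp (2*(π:ℂ)*Complex.I*(z₁ + z₂))))
    (h5 : OffRay (Complex.exp (2*(π:ℂ)*Complex.I*z₁))) :
    (PhiS ε s₁ s₂ z₁ z₂).re =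
      (1/(2*π)) *
        (BW (Complex.exp (2*(π:ℂ)*Complex.I*((s₂:ℂ) - 1) - 2*(π:ℂ)*Complex.I*(z₁ + z₂)))
         - BW (Complex.exp (2*(π:ℂ)*Complex.I*((s₂:ℂ) - 1) - 2*(π:ℂ)*Complex.I*z₂))
         + BW (Complex.exp (2*(π:ℂ)*Complex.I*z₂))
         - BW (Complex.exp (2*(π:ℂ)*Complex.I*(z₁ + z₂)))
         + BW (Complex.exp (2*(π:ℂ)*Complex.I*z₁)))
      + y₁ * deriv (fun t : ℝ => (PhiS ε s₁ s₂ ((x₁:ℂ) + (t:ℝ)*Complex.I) z₂).re) y₁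
      + y₂ * deriv (fun t : ℝ => (PhiS ε s₁ s₂ z₁ ((x₂:ℂ) + (t:ℝ)*Complex.I)).re) y₂ := by
  obtain ⟨e, rfl⟩ : ∃ e : ℝ, ε = e := by
    rcases hε with rfl | rfl
    exacts [⟨1, by simp⟩, ⟨-1, by simp⟩]
  rw [show τ * (s₂ - 1) - τ * (z₁ + z₂) = τ * (s₂ - 1) - τ * z₁ - τ * z₂ by ring] at h1 ⊢
  rw [deriv_re_comp_add_mul_I_of_hasDerivAt (hasDerivAt_PhiS_fst _ _ _ _ _ h1 h4 h5) hz₁,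
    deriv_re_comp_add_mul_I_of_hasDerivAt (hasDerivAt_PhiS_snd _ _ _ _ _ h1 h2 h3 h4) hz₂]
  obtain ⟨rfl, rfl⟩ : y₁ = z₁.im ∧ y₂ = z₂.im := by simp [hz₁, hz₂]
  rw [PhiS, re_one_div_two_pi_I_mul]
  simp only [BW_exp, Complex.add_re, Complex.add_im, Complex.sub_re, Complex.sub_im,
    Complex.mul_re, Complex.mul_im, Complex.I_re, Complex.I_im, Complex.ofReal_re,
    Complex.ofReal_im, Complex.one_re, Complex.one_im, Complex.re_ofNat, Complex.im_ofNat,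
    Complex.neg_re, Complex.neg_im, Complex.div_ofNat_re, Complex.div_ofNat_im]
  field_simp
  ring
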